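/- Fix x ∈ X^n and suppose π(Ĥ_min(x)) > 0. Then Λ_β(h,x) converges to ln(1/π(Ĥ_min(x))) in probability as β → ∞, where h ∼ Ĝ_β(x): for every η > 0, Pr_{h∼Ĝ_β(x)}{ |Λ_β(h,x) − ln(1/π(Ĥ_min(x)))| > η } → 0 as β → ∞. -/

import Mathlib

open MeasureTheory Real Filter

noncomputable section

variable {H X : Type*} [MeasurableSpace H] [MeasurableSpace X]

/-- Empirical loss of hypothesis `h` on sample `x`. -/
def empLoss (ℓ : H → X → ℝ) (n : ℕ) (h : H) (x : Fin n → X) : ℝ :=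
  (∑ i, ℓ h (x i)) / n

/-- True (expected) loss of hypothesis `h`. -/
def trueLoss (ℓ : H → X → ℝ) (μ : Measure X) (h : H) : ℝ :=
  ∫ z, ℓ h z ∂μ

/-- Partition function of the Gibbs posterior. -/
def partitionZ (ℓ : H → X → ℝ) (pr : Measure H) (n : ℕ) (β : ℝ) (x : Fin n → X) : ℝ :=
  ∫ h, Real.exp (-β * empLoss ℓ n h x) ∂pr

/-- Gibbs posterior at inverse temperature `β`. -/
def gibbs (ℓ : H → X → ℝ) (pr : Measure H) (n : ℕ) (β : ℝ) (x : Fin n → X) : Measure H :=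
  pr.withDensity fun h =>
    ENNReal.ofReal (Real.exp (-β * empLoss ℓ n h x) / partitionZ ℓ pr n β x)

/-- Joint measure ρ of the sample and the Gibbs draw, on H × Xⁿ. -/
def jointRho (ℓ : H → X → ℝ) (μ : Measure X) (pr : Measure H) (n : ℕ) (β : ℝ) :
    Measure (H × (Fin n → X)) :=
  (Measure.pi fun _ : Fin n => μ).bind fun x => (gibbs ℓ pr n β x).map fun h => (h, x)

/-- Cumulative distribution function of the empirical loss under the prior. -/
def phiHat (ℓ : H → X → ℝ) (pr : Measure H) (n : ℕ) (r : ℝ) (x : Fin n → X) : ℝ :=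
  (pr {g | empLoss ℓ n g x ≤ r}).toReal

/-- Complexity measure Λ_β(h,x). -/
def Lam (ℓ : H → X → ℝ) (pr : Measure H) (n : ℕ) (β : ℝ) (h : H) (x : Fin n → X) : ℝ :=
  sInf {v : ℝ | ∃ r : ℝ, 0 < phiHat ℓ pr n (empLoss ℓ n h x + r) x ∧
    v = β * r + Real.log (1 / phiHat ℓ pr n (empLoss ℓ n h x + r) x)}

/-- Relative entropy of two Bernoulli variables. -/
def klBin (p q : ℝ) : ℝ :=
  p * Real.log (p / q) + (1 - p) * Real.log ((1 - p) / (1 - q))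

/-!
Write `M = π(Ĥ_min)` and `m = L̂_min`. For `h ∈ Ĥ_min`, taking `r = 0` in the definition of
`Λ_β` gives `Λ_β(h) ≤ ln(1/M)`; conversely, by right-continuity of `φ̂` at `m` there is
`r₀ > m` with `φ̂(r₀) < M e^η`, so every `r ≤ r₀ - m` costs at least `ln(1/M) - η`, while every
larger `r` costs at least `β (r₀ - m) ≥ ln(1/M)` once `β` is large. Hence for large `β` the
event `|Λ_β - ln(1/M)| > η` lies inside `{L̂ > m}` up to a `π`-null set. Since the partition
function is at least `e^{-β m} M`, the Gibbs mass of `{L̂ > m}` is at most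
`M⁻¹ ∫_{L̂ > m} e^{-β (L̂ - m)} dπ`, which tends to `0` by dominated convergence.
-/

open scoped ENNReal Topology
open ProbabilityTheory

-- For the energy `f = fun g => empLoss ℓ n g x`, the next three definitions unfold to
-- `phiHat ℓ pr n · x`, `gibbs ℓ pr n · x` and `Lam ℓ pr n · · x`.
def sublevelMass (pr : Measure H) (f : H → ℝ) (r : ℝ) : ℝ :=
  (pr {g | f g ≤ r}).toReal

def gibbsMeasure (pr : Measure H) (f : H → ℝ) (β : ℝ) : Measure H :=
  pr.withDensity fun h => ENNReal.ofReal (exp (-β * f h) / ∫ g, exp (-β * f g) ∂pr)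

def complexity (pr : Measure H) (f : H → ℝ) (β : ℝ) (h : H) : ℝ :=
  sInf {v : ℝ | ∃ r : ℝ, 0 < sublevelMass pr f (f h + r) ∧
    v = β * r + log (1 / sublevelMass pr f (f h + r))}

section EnergyMinimum

variable {pr : Measure H} {f : H → ℝ} {m : ℝ}

lemma measure_lt_eq_zero_of_ae_le (hae : ∀ᵐ h ∂pr, m ≤ f h) : pr {h | f h < m} = 0 := by
  simpa only [not_le] using ae_iff.mp hae

lemma sublevelMass_eq_zero_of_lt (hae : ∀ᵐ h ∂pr, m ≤ f h) {r : ℝ} (hr : r < m) :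
    sublevelMass pr f r = 0 := by
  have hsub : {g | f g ≤ r} ⊆ {g | f g < m} := fun g (hg : f g ≤ r) => hg.trans_lt hr
  rw [sublevelMass, measure_mono_null hsub (measure_lt_eq_zero_of_ae_le hae), ENNReal.toReal_zero]

lemma sublevelMass_of_ae_le (hae : ∀ᵐ h ∂pr, m ≤ f h) :
    sublevelMass pr f m = (pr {g | f g = m}).toReal := by
  have hae_eq : {g | f g ≤ m} =ᵐ[pr] {g | f g = m} :=
    eventuallyEq_set.2 (hae.mono fun g hg => ⟨fun hg' => le_antisymm hg' hg, le_of_eq⟩)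
  rw [sublevelMass, measure_congr hae_eq]

lemma gibbsMeasure_lt_eq_zero (hae : ∀ᵐ h ∂pr, m ≤ f h) (β : ℝ) :
    gibbsMeasure pr f β {h | f h < m} = 0 :=
  withDensity_absolutelyContinuous _ _ (measure_lt_eq_zero_of_ae_le hae)

variable [IsProbabilityMeasure pr]

lemma sublevelMass_eq_cdf (hf : Measurable f) (r : ℝ) :
    sublevelMass pr f r = cdf (pr.map f) r := by
  have := Measure.isProbabilityMeasure_map (μ := pr) hf.aemeasurable
  rw [cdf_eq_real, measureReal_def, Measure.map_apply hf measurableSet_Iic]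
  rfl

lemma sublevelMass_mono (hf : Measurable f) : Monotone (sublevelMass pr f) := by
  simpa only [funext (sublevelMass_eq_cdf (pr := pr) hf)] using (cdf (pr.map f)).mono

lemma sublevelMass_le_one (r : ℝ) : sublevelMass pr f r ≤ 1 :=
  ENNReal.toReal_le_of_le_ofReal zero_le_one (by simpa using prob_le_one)

lemma exists_sublevelMass_lt (hf : Measurable f) (hae : ∀ᵐ h ∂pr, m ≤ f h)
    (hM : 0 < pr {g | f g = m}) {η : ℝ} (hη : 0 < η) :
    ∃ r, m < r ∧ sublevelMass pr f r < (pr {g | f g = m}).toReal * exp η := by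
  have hM' : 0 < (pr {g | f g = m}).toReal := ENNReal.toReal_pos hM.ne' (measure_ne_top _ _)
  have hlt : sublevelMass pr f m < (pr {g | f g = m}).toReal * exp η := by
    rw [sublevelMass_of_ae_le hae]
    exact lt_mul_of_one_lt_right hM' (one_lt_exp_iff.2 hη)
  have hright : ∀ᶠ r in 𝓝[>] m, sublevelMass pr f r < (pr {g | f g = m}).toReal * exp η := by
    simp only [sublevelMass_eq_cdf hf] at hlt ⊢
    exact nhdsWithin_mono _ Set.Ioi_subset_Ici_self
      (((cdf (pr.map f)).right_continuous m).eventually (gt_mem_nhds hlt))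
  exact (hright.and self_mem_nhdsWithin).exists.imp fun r hr => ⟨hr.2, hr.1⟩

lemma pos_of_sublevelMass_lt_mul_exp (hf : Measurable f) (hae : ∀ᵐ h ∂pr, m ≤ f h)
    (hM : 0 < pr {g | f g = m}) {η r₀ : ℝ} (hr₀ : m ≤ r₀)
    (hr₀η : sublevelMass pr f r₀ < (pr {g | f g = m}).toReal * exp η) : 0 < η := by
  have hMr₀ : (pr {g | f g = m}).toReal ≤ sublevelMass pr f r₀ :=
    (sublevelMass_of_ae_le hae).symm.trans_le (sublevelMass_mono hf hr₀)
  exact one_lt_exp_iff.1 ((lt_mul_iff_one_lt_right (ENNReal.toReal_pos hM.ne'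
    (measure_ne_top _ _))).1 (hMr₀.trans_lt hr₀η))

lemma log_inv_sub_le_of_sublevelMass_pos (hf : Measurable f) (hae : ∀ᵐ h ∂pr, m ≤ f h)
    (hM : 0 < pr {g | f g = m}) {η r₀ β s : ℝ} (hr₀ : m < r₀)
    (hr₀η : sublevelMass pr f r₀ < (pr {g | f g = m}).toReal * exp η)
    (hβ : log (1 / (pr {g | f g = m}).toReal) ≤ β * (r₀ - m))
    (hs : 0 < sublevelMass pr f (m + s)) :
    log (1 / (pr {g | f g = m}).toReal) - η ≤ β * s + log (1 / sublevelMass pr f (m + s)) := by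
  set M := (pr {g | f g = m}).toReal
  have hM' : 0 < M := ENNReal.toReal_pos hM.ne' (measure_ne_top _ _)
  have hs₀ : 0 ≤ s := by
    by_contra! hneg
    exact hs.ne' (sublevelMass_eq_zero_of_lt hae (by linarith))
  have hM1 : M ≤ 1 := (sublevelMass_of_ae_le hae).symm.trans_le (sublevelMass_le_one m)
  have hη := pos_of_sublevelMass_lt_mul_exp hf hae hM hr₀.le hr₀η
  have hlogM : 0 ≤ log (1 / M) := log_nonneg (one_le_one_div hM' hM1)
  have hβ₀ : 0 ≤ β := by nlinarith
  rcases le_or_gt (m + s) r₀ with hsr | hsr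
  · have hφ : sublevelMass pr f (m + s) ≤ M * exp η :=
      ((sublevelMass_mono hf hsr).trans_lt hr₀η).le
    have hlog : log (1 / (M * exp η)) ≤ log (1 / sublevelMass pr f (m + s)) :=
      log_le_log (by positivity) (one_div_le_one_div_of_le hs hφ)
    rw [one_div (M * _), log_inv, log_mul hM'.ne' (exp_pos η).ne', log_exp] at hlog
    rw [one_div M, log_inv]
    nlinarith [mul_nonneg hβ₀ hs₀]
  · have hlog : 0 ≤ log (1 / sublevelMass pr f (m + s)) :=
      log_nonneg (one_le_one_div hs (sublevelMass_le_one _))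
    nlinarith [mul_le_mul_of_nonneg_left (show r₀ - m ≤ s by linarith) hβ₀]

lemma abs_complexity_sub_log_le (hf : Measurable f) (hae : ∀ᵐ h ∂pr, m ≤ f h)
    (hM : 0 < pr {g | f g = m}) {η r₀ β : ℝ} (hr₀ : m < r₀)
    (hr₀η : sublevelMass pr f r₀ < (pr {g | f g = m}).toReal * exp η)
    (hβ : log (1 / (pr {g | f g = m}).toReal) ≤ β * (r₀ - m)) {h : H} (hh : f h = m) :
    |complexity pr f β h - log (1 / (pr {g | f g = m}).toReal)| ≤ η := by
  have hmem : log (1 / (pr {g | f g = m}).toReal) ∈ {v : ℝ | ∃ r : ℝ,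
      0 < sublevelMass pr f (f h + r) ∧ v = β * r + log (1 / sublevelMass pr f (f h + r))} :=
    ⟨0, by simpa [hh, sublevelMass_of_ae_le hae] using
      ENNReal.toReal_pos hM.ne' (measure_ne_top _ _), by simp [hh, sublevelMass_of_ae_le hae]⟩
  have hlower : ∀ v ∈ {v : ℝ | ∃ r : ℝ, 0 < sublevelMass pr f (f h + r) ∧
      v = β * r + log (1 / sublevelMass pr f (f h + r))},
      log (1 / (pr {g | f g = m}).toReal) - η ≤ v := by
    rintro v ⟨s, hs, rfl⟩
    rw [hh] at hs ⊢
    exact log_inv_sub_le_of_sublevelMass_pos hf hae hM hr₀ hr₀η hβ hs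
  have hη := pos_of_sublevelMass_lt_mul_exp hf hae hM hr₀.le hr₀η
  rw [complexity, abs_le]
  constructor
  · linarith [le_csInf ⟨_, hmem⟩ hlower]
  · linarith [csInf_le ⟨_, hlower⟩ hmem]

lemma eventually_abs_complexity_sub_log_le (hf : Measurable f) (hae : ∀ᵐ h ∂pr, m ≤ f h)
    (hM : 0 < pr {g | f g = m}) {η : ℝ} (hη : 0 < η) :
    ∀ᶠ β in atTop, ∀ h, f h = m →
      |complexity pr f β h - log (1 / (pr {g | f g = m}).toReal)| ≤ η := by
  obtain ⟨r₀, hr₀, hr₀η⟩ := exists_sublevelMass_lt hf hae hM hη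
  filter_upwards [eventually_ge_atTop (log (1 / (pr {g | f g = m}).toReal) / (r₀ - m))]
    with β hβ h hh
  exact abs_complexity_sub_log_le hf hae hM hr₀ hr₀η
    ((div_le_iff₀ (sub_pos.2 hr₀)).1 hβ) hh

lemma integrable_exp_neg_mul (hf : Measurable f) (hae : ∀ᵐ h ∂pr, m ≤ f h) {β : ℝ}
    (hβ : 0 ≤ β) : Integrable (fun h => exp (-β * f h)) pr := by
  refine (integrable_const (exp (-β * m))).mono' (by fun_prop) ?_
  filter_upwards [hae] with h hh
  rw [norm_of_nonneg (exp_pos _).le, exp_le_exp]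
  nlinarith

lemma exp_mul_measure_le_integral (hf : Measurable f) (hae : ∀ᵐ h ∂pr, m ≤ f h) {β : ℝ}
    (hβ : 0 ≤ β) : exp (-β * m) * (pr {g | f g = m}).toReal ≤ ∫ g, exp (-β * f g) ∂pr := by
  have hmin : MeasurableSet {g | f g = m} := hf (measurableSet_singleton m)
  calc exp (-β * m) * (pr {g | f g = m}).toReal
      = ∫ g in {g | f g = m}, exp (-β * f g) ∂pr := by
        rw [setIntegral_congr_fun hmin fun g (hg : f g = m) => by rw [hg], setIntegral_const,
          smul_eq_mul, mul_comm, measureReal_def]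
    _ ≤ ∫ g, exp (-β * f g) ∂pr :=
        setIntegral_le_integral (integrable_exp_neg_mul hf hae hβ)
          (Eventually.of_forall fun _ => (exp_pos _).le)

lemma gibbsMeasure_gt_le (hf : Measurable f) (hae : ∀ᵐ h ∂pr, m ≤ f h)
    (hM : 0 < pr {g | f g = m}) {β : ℝ} (hβ : 0 ≤ β) :
    gibbsMeasure pr f β {h | m < f h} ≤ ENNReal.ofReal ((pr {g | f g = m}).toReal)⁻¹ *
      ∫⁻ h in {h | m < f h}, ENNReal.ofReal (exp (-β * (f h - m))) ∂pr := by
  have hM' : 0 < (pr {g | f g = m}).toReal := ENNReal.toReal_pos hM.ne' (measure_ne_top _ _)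
  have hZ := exp_mul_measure_le_integral hf hae hβ
  have hgt : MeasurableSet {h | m < f h} := hf measurableSet_Ioi
  rw [gibbsMeasure, withDensity_apply _ hgt,
    ← lintegral_const_mul' _ _ ENNReal.ofReal_ne_top]
  refine lintegral_mono fun h => ?_
  rw [← ENNReal.ofReal_mul (inv_nonneg.2 hM'.le)]
  refine ENNReal.ofReal_le_ofReal ((div_le_div_of_nonneg_left (exp_pos _).le
    (by positivity) hZ).trans_eq ?_)
  rw [show -β * (f h - m) = -β * f h - -β * m by ring, exp_sub]
  field_simp

lemma tendsto_setLIntegral_exp_neg_mul (hf : Measurable f) :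
    Tendsto (fun β : ℝ => ∫⁻ h in {h | m < f h}, ENNReal.ofReal (exp (-β * (f h - m))) ∂pr)
      atTop (𝓝 0) := by
  have hlim := tendsto_lintegral_filter_of_dominated_convergence (μ := pr.restrict {h | m < f h})
    (l := atTop) (F := fun β h => ENNReal.ofReal (exp (-β * (f h - m)))) (f := fun _ => 0)
    (fun _ => 1) (Eventually.of_forall fun β => by fun_prop)
    ?bound (by simp) ?pointwise
  · simpa using hlim
  case bound =>
    filter_upwards [eventually_ge_atTop 0] with β hβ
    filter_upwards [ae_restrict_mem (hf measurableSet_Ioi)] with h (hh : m < f h)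
    rw [← ENNReal.ofReal_one, ENNReal.ofReal_le_ofReal_iff zero_le_one, exp_le_one_iff]
    nlinarith
  case pointwise =>
    filter_upwards [ae_restrict_mem (hf measurableSet_Ioi)] with h (hh : m < f h)
    have hexp : Tendsto (fun β : ℝ => exp (-(β * (f h - m)))) atTop (𝓝 0) :=
      tendsto_exp_neg_atTop_nhds_zero.comp (tendsto_id.atTop_mul_const (sub_pos.2 hh))
    simpa only [neg_mul, ENNReal.ofReal_zero] using ENNReal.tendsto_ofReal hexp

theorem tendsto_gibbsMeasure_abs_complexity_sub_log_gt (hf : Measurable f)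
    (hae : ∀ᵐ h ∂pr, m ≤ f h) (hM : 0 < pr {g | f g = m}) {η : ℝ} (hη : 0 < η) :
    Tendsto (fun β => gibbsMeasure pr f β
        {h | η < |complexity pr f β h - log (1 / (pr {g | f g = m}).toReal)|})
      atTop (𝓝 0) := by
  have hbound : ∀ᶠ β in atTop, gibbsMeasure pr f β
      {h | η < |complexity pr f β h - log (1 / (pr {g | f g = m}).toReal)|} ≤
      ENNReal.ofReal ((pr {g | f g = m}).toReal)⁻¹ *
        ∫⁻ h in {h | m < f h}, ENNReal.ofReal (exp (-β * (f h - m))) ∂pr := by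
    filter_upwards [eventually_abs_complexity_sub_log_le hf hae hM hη, eventually_ge_atTop 0]
      with β hΛ hβ
    have hsub : {h | η < |complexity pr f β h - log (1 / (pr {g | f g = m}).toReal)|} ⊆
        {h | m < f h} ∪ {h | f h < m} := fun h hh =>
      (Ne.lt_or_gt fun hmin => (hΛ h hmin).not_gt hh).symm
    calc _ ≤ gibbsMeasure pr f β ({h | m < f h} ∪ {h | f h < m}) := measure_mono hsub
      _ ≤ gibbsMeasure pr f β {h | m < f h} + gibbsMeasure pr f β {h | f h < m} :=
          measure_union_le _ _
      _ ≤ _ := by rw [gibbsMeasure_lt_eq_zero hae, add_zero]; exact gibbsMeasure_gt_le hf hae hM hβ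
  have hlim := ENNReal.Tendsto.const_mul (tendsto_setLIntegral_exp_neg_mul (pr := pr) (m := m) hf)
    (Or.inr (ENNReal.ofReal_ne_top (r := ((pr {g | f g = m}).toReal)⁻¹)))
  rw [mul_zero] at hlim
  exact tendsto_of_tendsto_of_tendsto_of_le_of_le' tendsto_const_nhds hlim
    (Eventually.of_forall fun _ => zero_le) hbound

end EnergyMinimum

lemma measurable_empLoss {ℓ : H → X → ℝ} (hmeas : Measurable (Function.uncurry ℓ)) (n : ℕ)
    (x : Fin n → X) : Measurable fun h => empLoss ℓ n h x :=
  (Finset.univ.measurable_sum fun _ _ =>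
    hmeas.comp (measurable_id.prodMk measurable_const)).div_const _

theorem statement11_general
    (pr : Measure H) [IsProbabilityMeasure pr]
    (ℓ : H → X → ℝ) (hmeas : Measurable (Function.uncurry ℓ))
    (hnn : ∀ h z, 0 ≤ ℓ h z)
    (n : ℕ) (x : Fin n → X)
    (hpos : 0 < pr {h | empLoss ℓ n h x = essInf (fun g => empLoss ℓ n g x) pr}) :
    ∀ η : ℝ, 0 < η →
      Filter.Tendsto
        (fun β : ℝ => gibbs ℓ pr n β x
          {h | η < |Lam ℓ pr n β h x -
            Real.log (1 / (pr {g | empLoss ℓ n g x =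
              essInf (fun g' => empLoss ℓ n g' x) pr}).toReal)|})
        Filter.atTop (nhds 0) := by
  intro η hη
  have hae : ∀ᵐ h ∂pr, essInf (fun g => empLoss ℓ n g x) pr ≤ empLoss ℓ n h x :=
    ae_essInf_le (isBoundedUnder_of ⟨0, fun h =>
      div_nonneg (Finset.sum_nonneg fun i _ => hnn h (x i)) n.cast_nonneg⟩)
  exact tendsto_gibbsMeasure_abs_complexity_sub_log_gt (measurable_empLoss hmeas n x) hae hpos hη

theorem statement11
    (pr : Measure H) [IsProbabilityMeasure pr]
    (ℓ : H → X → ℝ) (hmeas : Measurable (Function.uncurry ℓ))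
    (hnn : ∀ h z, 0 ≤ ℓ h z)
    (n : ℕ) (hn : 0 < n) (x : Fin n → X)
    (hpos : 0 < pr {h | empLoss ℓ n h x = essInf (fun g => empLoss ℓ n g x) pr}) :
    ∀ η : ℝ, 0 < η →
      Filter.Tendsto
        (fun β : ℝ => gibbs ℓ pr n β x
          {h | η < |Lam ℓ pr n β h x -
            Real.log (1 / (pr {g | empLoss ℓ n g x =
              essInf (fun g' => empLoss ℓ n g' x) pr}).toReal)|})
        Filter.atTop (nhds 0) :=
  statement11_general pr ℓ hmeas hnn n x hpos
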